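/- Let T be a complex algebraic torus with involution θ and β a θ-fixed character of T with coroot β^∨ satisfying ⟨β, β^∨⟩ = 2 and θ ∘ β^∨ = β^∨. Then the natural map ker(β|_{T^θ}) / ker(β|_{(T^θ)⁰}) → T^θ / (T^θ)⁰ induced by inclusion is an isomorphism of groups. -/

import Mathlib

/-- The complex torus `T = (ℂˣ)^n`. -/
abbrev Torus (n : ℕ) := Fin n → ℂˣ

/-- The algebraic character of `T = (ℂˣ)^n` with exponent vector `k ∈ X*(T) = ℤ^n`. -/
def torusChar {n : ℕ} (k : Fin n → ℤ) : Torus n →* ℂˣ where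
  toFun t := ∏ i, (t i) ^ (k i)
  map_one' := by simp
  map_mul' s t := by
    simp [Pi.mul_apply, mul_zpow, Finset.prod_mul_distrib]

/-- The algebraic cocharacter of `T = (ℂˣ)^n` with exponent vector `c ∈ X_*(T) = ℤ^n`. -/
def torusCochar {n : ℕ} (c : Fin n → ℤ) : ℂˣ →* Torus n where
  toFun z := fun i => z ^ (c i)
  map_one' := by funext i; simp
  map_mul' z w := by funext i; simp [mul_zpow]

/-- The fixed subgroup `T^θ` of an endomorphism `θ` of the torus. -/
def fixedSubgroup {n : ℕ} (θ : Torus n →* Torus n) : Subgroup (Torus n) where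
  carrier := {t | θ t = t}
  one_mem' := by simp
  mul_mem' := by intro a b ha hb; simp only [Set.mem_setOf_eq] at *; simp [ha, hb]
  inv_mem' := by intro a ha; simp only [Set.mem_setOf_eq] at *; simp [ha]

/-- The identity component `(T^θ)⁰ = (1+θ)T`, the image of `t ↦ t·θ(t)`. -/
def normSubgroup {n : ℕ} (θ : Torus n →* Torus n) : Subgroup (Torus n) :=
  (MonoidHom.id (Torus n) * θ).range


/-!
Since `β^∨` is `θ`-fixed, `β^∨(w) = β^∨(w^{1/2}) · θ(β^∨(w^{1/2}))` lies in `(T^θ)⁰ = (1+θ)T` for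
every `w`. As `⟨β, β^∨⟩ = 2`, for `t ∈ T^θ` the element `t · β^∨(β(t)^{1/2})⁻¹` lies in
`ker β ∩ T^θ` and represents the same component as `t`. The kernel statement is formal.
-/

theorem zpow_finset_sum {G ι : Type*} [CommGroup G] (a : G) (s : Finset ι) (f : ι → ℤ) :
    a ^ ∑ i ∈ s, f i = ∏ i ∈ s, a ^ f i := by
  simpa [← ofAdd_sum] using map_prod (zpowersHom G a) (fun i => Multiplicative.ofAdd (f i)) s

theorem Units.exists_sq_eq {K : Type*} [Field K] [IsAlgClosed K] (w : Kˣ) :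
    ∃ v : Kˣ, v ^ 2 = w := by
  obtain ⟨z, hz⟩ := IsAlgClosed.exists_pow_nat_eq (w : K) two_pos
  have hz0 : z ≠ 0 := by
    rintro rfl
    exact w.ne_zero (by simpa using hz.symm)
  exact ⟨Units.mk0 z hz0, Units.ext (by simpa using hz)⟩

section QuotientRestriction

variable {G : Type*} [Group G] (H K N : Subgroup G) [(N.subgroupOf H).Normal]

abbrev infToQuotient : ↥(H ⊓ K) →* H ⧸ N.subgroupOf H :=
  (QuotientGroup.mk' (N.subgroupOf H)).comp (Subgroup.inclusion inf_le_left)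

theorem ker_infToQuotient : (infToQuotient H K N).ker = (N ⊓ K).subgroupOf (H ⊓ K) := by
  ext x
  simp only [MonoidHom.mem_ker, MonoidHom.comp_apply, QuotientGroup.mk'_apply,
    QuotientGroup.eq_one_iff, Subgroup.mem_subgroupOf, Subgroup.coe_inclusion, Subgroup.mem_inf]
  exact ⟨fun hN => ⟨hN, (Subgroup.mem_inf.1 x.2).2⟩, And.left⟩

theorem infToQuotient_surjective (h : ∀ x ∈ H, ∃ y ∈ H ⊓ N, x * y⁻¹ ∈ K) :
    Function.Surjective (infToQuotient H K N) := by
  intro q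
  obtain ⟨x, rfl⟩ := QuotientGroup.mk'_surjective _ q
  obtain ⟨y, ⟨hyH, hyN⟩, hxyK⟩ := h x x.2
  refine ⟨⟨x * y⁻¹, H.mul_mem x.2 (H.inv_mem hyH), hxyK⟩, ?_⟩
  rw [MonoidHom.comp_apply, QuotientGroup.mk'_apply, QuotientGroup.mk'_apply, QuotientGroup.eq,
    Subgroup.mem_subgroupOf]
  simpa using hyN

end QuotientRestriction

section Torus

variable {n : ℕ}

theorem torusChar_torusCochar (k c : Fin n → ℤ) (z : ℂˣ) :
    torusChar k (torusCochar c z) = z ^ ∑ i, c i * k i := by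
  simp only [torusChar, torusCochar, MonoidHom.coe_mk, OneHom.coe_mk, ← zpow_mul]
  rw [zpow_finset_sum]

variable {θ : Torus n →* Torus n} {c : Fin n → ℤ}

theorem torusCochar_mem_normSubgroup (hθc : ∀ z, θ (torusCochar c z) = torusCochar c z)
    (z : ℂˣ) : torusCochar c z ∈ normSubgroup θ := by
  obtain ⟨v, rfl⟩ := Units.exists_sq_eq z
  refine ⟨torusCochar c v, ?_⟩
  change torusCochar c v * θ (torusCochar c v) = torusCochar c (v ^ 2)
  rw [hθc, ← sq, map_pow]

theorem exists_mul_torusCochar_inv_mem_ker {k : Fin n → ℤ} (hpair : ∑ i, c i * k i = 2)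
    (t : Torus n) : ∃ w : ℂˣ, t * (torusCochar c w)⁻¹ ∈ (torusChar k).ker := by
  obtain ⟨w, hw⟩ := Units.exists_sq_eq (torusChar k t)
  refine ⟨w, ?_⟩
  rw [MonoidHom.mem_ker, map_mul, map_inv, torusChar_torusCochar, hpair, zpow_two, ← sq, hw,
    mul_inv_cancel]

end Torus

theorem kernel_component_group_iso_general
    (n : ℕ) (θ : Torus n →* Torus n)
    (k c : Fin n → ℤ)
    (hθc : ∀ z : ℂˣ, θ (torusCochar c z) = torusCochar c z)
    (hpair : ∑ i, c i * k i = 2) :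
    Function.Surjective
      ((QuotientGroup.mk' ((normSubgroup θ).subgroupOf (fixedSubgroup θ))).comp
        (Subgroup.inclusion
          (inf_le_left : fixedSubgroup θ ⊓ (torusChar k).ker ≤ fixedSubgroup θ))) ∧
    ((QuotientGroup.mk' ((normSubgroup θ).subgroupOf (fixedSubgroup θ))).comp
        (Subgroup.inclusion
          (inf_le_left : fixedSubgroup θ ⊓ (torusChar k).ker ≤ fixedSubgroup θ))).ker
      = (normSubgroup θ ⊓ (torusChar k).ker).subgroupOf
          (fixedSubgroup θ ⊓ (torusChar k).ker) := by
  refine ⟨infToQuotient_surjective _ _ _ fun t _ => ?_, ker_infToQuotient _ _ _⟩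
  obtain ⟨w, hw⟩ := exists_mul_torusCochar_inv_mem_ker hpair t
  exact ⟨torusCochar c w, ⟨hθc w, torusCochar_mem_normSubgroup hθc w⟩, hw⟩

/-- Let `θ` be an algebraic involution of `T = (ℂˣ)^n` and `β = torusChar k` a `θ`-fixed
character with `θ`-fixed coroot `β^∨ = torusCochar c`, `⟨β,β^∨⟩ = 2`.  Then the natural
map `ker(β|_{T^θ}) / ker(β|_{(T^θ)⁰}) → T^θ/(T^θ)⁰` induced by inclusion is an
isomorphism: the composite `ker(β|_{T^θ}) → T^θ/(T^θ)⁰` is surjective with kernel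
`ker(β|_{(T^θ)⁰}) = (T^θ)⁰ ∩ ker β`, where `(T^θ)⁰ = (1+θ)T`. -/
theorem kernel_component_group_iso
    (n : ℕ) (θ : Torus n →* Torus n) (hcont : Continuous θ) (hθ : ∀ t, θ (θ t) = t)
    (k c : Fin n → ℤ)
    (hβθ : ∀ t, torusChar k (θ t) = torusChar k t)
    (hθc : ∀ z : ℂˣ, θ (torusCochar c z) = torusCochar c z)
    (hpair : ∑ i, c i * k i = 2) :
    Function.Surjective
      ((QuotientGroup.mk' ((normSubgroup θ).subgroupOf (fixedSubgroup θ))).comp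
        (Subgroup.inclusion
          (inf_le_left : fixedSubgroup θ ⊓ (torusChar k).ker ≤ fixedSubgroup θ))) ∧
    ((QuotientGroup.mk' ((normSubgroup θ).subgroupOf (fixedSubgroup θ))).comp
        (Subgroup.inclusion
          (inf_le_left : fixedSubgroup θ ⊓ (torusChar k).ker ≤ fixedSubgroup θ))).ker
      = (normSubgroup θ ⊓ (torusChar k).ker).subgroupOf
          (fixedSubgroup θ ⊓ (torusChar k).ker) :=
  kernel_component_group_iso_general n θ k c hθc hpair
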